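/- Let X/K be smooth and projective over a field K, and let σ : Y → X be a projective surjective generically finite morphism of K-varieties (e.g. arising from an alteration). If H^i(X̄) is supported in codimension ≥ 1 and σ is an isomorphism over X∖D for some divisor D ⊂ X supporting all of H^i(X̄), then H^i(Ȳ) is also supported in codimension ≥ 1, i.e. N¹H^i(Ȳ) = H^i(Ȳ); in other words, smoothness of X and N¹H^i(X̄) = H^i(X̄) imply N¹H^i(Ȳ) = H^i(Ȳ). -/

import Mathlib

/-!
Common scaffold: projective morphisms, flat morphisms, abstract geometric ℓ-adic cohomology.
-/

open AlgebraicGeometry CategoryTheory Limits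

noncomputable section

attribute [local instance] MvPolynomial.gradedAlgebra

/-- Projective `n`-space over `Spec ℤ`, as `Proj ℤ[x₀,…,xₙ]`. -/
def ProjSpaceZ (n : ℕ) : Scheme :=
  Proj (MvPolynomial.homogeneousSubmodule (Fin (n + 1)) ℤ)

/-- The unique morphism to the terminal scheme `Spec ℤ`. -/
def toSpecZ (X : Scheme) : X ⟶ Spec (CommRingCat.of ℤ) := specZIsTerminal.from X

/-- Relative projective `n`-space `ℙⁿ_S = ℙⁿ_ℤ ×_{Spec ℤ} S` over a scheme `S`. -/
def ProjSpaceOver (n : ℕ) (S : Scheme) : Scheme :=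
  pullback (toSpecZ (ProjSpaceZ n)) (toSpecZ S)

/-- The structure morphism `ℙⁿ_S ⟶ S`. -/
def projSpaceOverProj (n : ℕ) (S : Scheme) : ProjSpaceOver n S ⟶ S :=
  pullback.snd _ _

/-- A morphism of schemes `f : X ⟶ S` is projective if it factors as a closed immersion
into some relative projective space `ℙⁿ_S` followed by the projection to `S`. -/
def IsProjectiveMorphism {X S : Scheme} (f : X ⟶ S) : Prop :=
  ∃ (n : ℕ) (ι : X ⟶ ProjSpaceOver n S),
    IsClosedImmersion ι ∧ ι ≫ projSpaceOverProj n S = f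

/-- A morphism of schemes is flat if all the induced maps on stalks are flat ring maps. -/
def IsFlatMorphism {X S : Scheme} (f : X ⟶ S) : Prop :=
  ∀ x, (f.stalkMap x).hom.Flat

variable (ℓ : ℕ) [Fact ℓ.Prime]

/-- Abstract (geometric) `ℓ`-adic étale cohomology: a contravariant functor from schemes over a
field `K` to `ℚ_ℓ`-vector spaces; `H X i` stands for `H^i(X̄, ℚ_ℓ) = H^i_{ét}(X ⊗_K K̄, ℚ_ℓ)`. -/
structure GeometricCohomology where
  /-- `H X i = H^i(X̄, ℚ_ℓ)` -/
  H : Scheme → ℕ → ModuleCat ℚ_[ℓ]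
  /-- contravariant functoriality (pullback) -/
  map : ∀ {X Y : Scheme}, (X ⟶ Y) → ∀ i, H Y i ⟶ H X i
  map_id : ∀ (X : Scheme) (i : ℕ), map (𝟙 X) i = 𝟙 (H X i)
  map_comp : ∀ {X Y Z : Scheme} (f : X ⟶ Y) (g : Y ⟶ Z) (i : ℕ),
    map (f ≫ g) i = map g i ≫ map f i

variable {ℓ}

/-- The first coniveau level `N¹H^i(X̄)`:  classes vanishing on some nonempty open subset
(equivalently, on the complement of some divisor `D ⊂ X`). -/
def GeometricCohomology.N1 (E : GeometricCohomology ℓ) (X : Scheme) (i : ℕ) :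
    Set (E.H X i) :=
  {α | ∃ U : X.Opens, U ≠ ⊥ ∧ E.map U.ι i α = 0}

/-- `H^i(X̄)` is supported in codimension `≥ 1` iff `N¹H^i(X̄) = H^i(X̄)`. -/
def GeometricCohomology.SupportedInCodimOne (E : GeometricCohomology ℓ) (X : Scheme)
    (i : ℕ) : Prop :=
  ∀ α : E.H X i, α ∈ E.N1 X i

end

/-!
Over `U₀` the morphism `σ` is an isomorphism `g : Y_{U₀} ≅ U₀`, so the trace `tr U₀`, being a
left inverse of the isomorphism `g^*`, is injective. By naturality of the trace, the restriction
of `β ∈ H^i(Ȳ)` to `Y_{U₀}` has trace `(trace_{Y/X} β)|_{U₀}`, which vanishes since `D` supports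
`H^i(X̄)`. Hence `β` vanishes on the nonempty open `σ⁻¹(U₀) ⊂ Y`.
-/

namespace GeometricCohomology

variable {ℓ : ℕ} [Fact ℓ.Prime] (E : GeometricCohomology ℓ)

instance isIso_map {X Y : Scheme} (f : X ⟶ Y) [IsIso f] (i : ℕ) : IsIso (E.map f i) :=
  ⟨E.map (inv f) i, by rw [← E.map_comp, IsIso.inv_hom_id, E.map_id],
    by rw [← E.map_comp, IsIso.hom_inv_id, E.map_id]⟩

lemma injective_of_map_comp_eq_id {X Y : Scheme} (f : X ⟶ Y) [IsIso f] {i : ℕ}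
    {t : E.H X i ⟶ E.H Y i} (ht : E.map f i ≫ t = 𝟙 _) : Function.Injective t := by
  rw [IsIso.eq_inv_of_hom_inv_id ht, ← ModuleCat.mono_iff_injective]
  infer_instance

lemma mem_N1_of_map_eq_zero {Z Y : Scheme} (f : Z ⟶ Y) [IsOpenImmersion f] [Nonempty Z]
    {i : ℕ} {α : E.H Y i} (hα : E.map f i α = 0) : α ∈ E.N1 Y i := by
  refine ⟨f.opensRange, ?_, ?_⟩
  · obtain ⟨z⟩ := ‹Nonempty Z›
    exact (TopologicalSpace.Opens.ne_bot_iff_nonempty _).mpr ⟨f.base z, z, rfl⟩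
  · rw [← f.isoOpensRange_inv_comp, E.map_comp, ModuleCat.comp_apply, hα, map_zero]

end GeometricCohomology

lemma nonempty_of_isIso_of_ne_bot {Z X : Scheme} {U : X.Opens} (hU : U ≠ ⊥) (g : Z ⟶ U)
    [IsIso g] : Nonempty Z := by
  obtain ⟨x, hx⟩ := (TopologicalSpace.Opens.ne_bot_iff_nonempty U).mp hU
  exact ⟨(inv g).base ⟨x, hx⟩⟩

theorem supported_in_codim_one_of_alteration_general
    (ℓ : ℕ) [Fact ℓ.Prime]
    -- an (abstract) geometric `ℓ`-adic étale cohomology theory for varieties over `K`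
    (E : GeometricCohomology ℓ)
    -- `X` is a smooth projective variety over `K`
    (X : Scheme)
    -- `σ : Y ⟶ X` is a projective surjective generically finite morphism of `K`-varieties
    (Y : Scheme) (σ : Y ⟶ X)
    -- context: trace maps `H^i(Ȳ_U) ⟶ H^i(Ū)` splitting `σ*` for every open `U ⊂ X`
    -- (`Y_U = U ×_X Y`), and a trace map for `Y/X` itself, compatible with restriction
    (tr : ∀ (U : X.Opens) (i : ℕ), E.H (pullback σ U.ι) i ⟶ E.H U i)
    (htr_split : ∀ (U : X.Opens) (i : ℕ),
      E.map (pullback.snd σ U.ι) i ≫ tr U i = 𝟙 (E.H U i))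
    (trX : ∀ i : ℕ, E.H Y i ⟶ E.H X i)
    (htr_nat : ∀ (U : X.Opens) (i : ℕ),
      trX i ≫ E.map U.ι i = E.map (pullback.fst σ U.ι) i ≫ tr U i)
    -- the degree of cohomology under consideration
    (i : ℕ)
    -- `U₀ = X ∖ D` for a divisor `D ⊂ X` supporting all of `H^i(X̄)` ...
    (U₀ : X.Opens) (hU₀ : U₀ ≠ ⊥)
    (hsupp : ∀ α : E.H X i, E.map U₀.ι i α = 0)
    -- ... such that `σ` is an isomorphism over `X ∖ D`
    (hiso : IsIso (pullback.snd σ U₀.ι)) :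
    -- then `N¹H^i(Ȳ) = H^i(Ȳ)`
    E.SupportedInCodimOne Y i := by
  intro β
  have : Nonempty ↥(pullback σ U₀.ι) := nonempty_of_isIso_of_ne_bot hU₀ (pullback.snd σ U₀.ι)
  refine E.mem_N1_of_map_eq_zero (pullback.fst σ U₀.ι) ?_
  apply E.injective_of_map_comp_eq_id (pullback.snd σ U₀.ι) (htr_split U₀ i)
  rw [map_zero, ← ModuleCat.comp_apply, ← htr_nat, ModuleCat.comp_apply, hsupp]

/-- **(2.6)**.  Let `X/K` be smooth and projective over a field `K` and `σ : Y ⟶ X` a projective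
surjective generically finite morphism of `K`-varieties.  Suppose `H^i(X̄)` is supported in
codimension `≥ 1`, and that `σ` is an isomorphism over `X ∖ D` for a divisor `D ⊂ X` supporting
all of `H^i(X̄)` (below, `U₀` plays the role of the open complement `X ∖ D`).  Then `H^i(Ȳ)` is
also supported in codimension `≥ 1`, i.e. `N¹H^i(Ȳ) = H^i(Ȳ)`.
The trace maps `(trace)_{Y/X} : H^i(Ȳ_U) ⟶ H^i(Ū)` splitting `σ*` (for `X/K` smooth) and their
compatibility with restriction are part of the background context and appear as hypotheses. -/
theorem supported_in_codim_one_of_alteration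
    (K : Type) [Field K]
    (ℓ : ℕ) [Fact ℓ.Prime] (hℓ : (ℓ : K) ≠ 0)
    -- an (abstract) geometric `ℓ`-adic étale cohomology theory for varieties over `K`
    (E : GeometricCohomology ℓ)
    -- `X` is a smooth projective variety over `K`
    (X : Scheme) (p : X ⟶ Spec (CommRingCat.of K))
    (hsmooth : IsSmooth p) (hproj : IsProjectiveMorphism p)
    -- `σ : Y ⟶ X` is a projective surjective generically finite morphism of `K`-varieties
    (Y : Scheme) (q : Y ⟶ Spec (CommRingCat.of K)) (σ : Y ⟶ X) (hσK : σ ≫ p = q)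
    (hσproj : IsProjectiveMorphism σ) (hσsurj : Function.Surjective σ.base)
    (hgenfin : ∃ V : X.Opens, V ≠ ⊥ ∧ IsFinite (pullback.snd σ V.ι))
    -- context: trace maps `H^i(Ȳ_U) ⟶ H^i(Ū)` splitting `σ*` for every open `U ⊂ X`
    -- (`Y_U = U ×_X Y`), and a trace map for `Y/X` itself, compatible with restriction
    (tr : ∀ (U : X.Opens) (i : ℕ), E.H (pullback σ U.ι) i ⟶ E.H U i)
    (htr_split : ∀ (U : X.Opens) (i : ℕ),
      E.map (pullback.snd σ U.ι) i ≫ tr U i = 𝟙 (E.H U i))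
    (trX : ∀ i : ℕ, E.H Y i ⟶ E.H X i)
    (htrX_split : ∀ i : ℕ, E.map σ i ≫ trX i = 𝟙 (E.H X i))
    (htr_nat : ∀ (U : X.Opens) (i : ℕ),
      trX i ≫ E.map U.ι i = E.map (pullback.fst σ U.ι) i ≫ tr U i)
    -- the degree of cohomology under consideration
    (i : ℕ) (hi : 1 ≤ i)
    -- `H^i(X̄)` is supported in codimension `≥ 1`
    (hconiveau : E.SupportedInCodimOne X i)
    -- `U₀ = X ∖ D` for a divisor `D ⊂ X` supporting all of `H^i(X̄)` ...
    (U₀ : X.Opens) (hU₀ : U₀ ≠ ⊥)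
    (hsupp : ∀ α : E.H X i, E.map U₀.ι i α = 0)
    -- ... such that `σ` is an isomorphism over `X ∖ D`
    (hiso : IsIso (pullback.snd σ U₀.ι)) :
    -- then `N¹H^i(Ȳ) = H^i(Ȳ)`
    E.SupportedInCodimOne Y i :=
  supported_in_codim_one_of_alteration_general ℓ E X Y σ tr htr_split trX htr_nat i U₀ hU₀ hsupp
    hiso
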